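/- arXiv:1212.2795 — 2 statements merged into one kernel-verified Lean document; each statement's English description precedes it below -/
import Mathlib

section
/- (Frankl–Rödl) Let $G = (V,E)$ be an $r$-uniform hypergraph on $[n]$ and let $\vec{x} = (x_1,\dots,x_n)$ be an optimal weighting for $G$ with exactly $k \le n$ nonzero weights, chosen so that the number of nonzero weights is minimal among all optimal weightings. Then for every pair $\{i,j\} \in [k]^{(2)}$: (a) $\lambda(E_i, \vec{x}) = \lambda(E_j, \vec{x}) = r\,\lambda(G)$, and (b) there is an edge of $E$ containing both $i$ and $j$. -/
open Finset

/-- Weightings on vertex set `[n] = {1,…,n}`: nonnegative, summing to 1, zero outside `[n]`. -/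
def simplexOn (n : ℕ) (x : ℕ → ℝ) : Prop :=
  (∀ i, 0 ≤ x i) ∧ (∑ i ∈ Finset.Icc 1 n, x i = 1) ∧ ∀ i, i ∉ Finset.Icc 1 n → x i = 0

/-- `λ(F, x) = ∑_{e ∈ F} ∏_{i ∈ e} x i` for a family of finite sets `F`. -/
def lagF (E : Finset (Finset ℕ)) (x : ℕ → ℝ) : ℝ := ∑ e ∈ E, ∏ i ∈ e, x i

/-- The Lagrangian of the hypergraph with edge set `E` on vertex set `[n]`. -/
noncomputable def lagr (n : ℕ) (E : Finset (Finset ℕ)) : ℝ :=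
  sSup {v : ℝ | ∃ x : ℕ → ℝ, simplexOn n x ∧ v = lagF E x}

/-- `E` is the edge set of an `r`-uniform hypergraph on vertex set `[n]`. -/
def isRGraph (r n : ℕ) (E : Finset (Finset ℕ)) : Prop :=
  ∀ e ∈ E, e.card = r ∧ e ⊆ Finset.Icc 1 n

/-- The complete `r`-graph `[l]^(r)`: all `r`-subsets of `[l]`. -/
def completeR (r l : ℕ) : Finset (Finset ℕ) := (Finset.Icc 1 l).powersetCard r

/-- The link `E_i` of vertex `i`. -/
def link (E : Finset (Finset ℕ)) (i : ℕ) : Finset (Finset ℕ) :=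
  (E.filter fun e => i ∈ e).image fun e => e.erase i

/-- The pair link `E_{ij}`. -/
def link2 (E : Finset (Finset ℕ)) (i j : ℕ) : Finset (Finset ℕ) :=
  (E.filter fun e => i ∈ e ∧ j ∈ e).image fun e => (e.erase i).erase j

/-- `E_{i \ j} = E_i ∩ E_j^c`. -/
def linkDiff (E : Finset (Finset ℕ)) (i j : ℕ) : Finset (Finset ℕ) :=
  (link E i).filter fun A => insert j A ∉ E

/-- `A` dominates `B` from below: same size and the `k`-th smallest element of `A`
is at most the `k`-th smallest element of `B`, for every `k`. -/
def domBelow (A B : Finset ℕ) : Prop :=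
  A.card = B.card ∧ ∀ k, (Finset.sort A (· ≤ ·)).getD k 0 ≤ (Finset.sort B (· ≤ ·)).getD k 0

/-- `E` is left-compressed. -/
def leftCompressed (E : Finset (Finset ℕ)) : Prop :=
  ∀ B ∈ E, ∀ A : Finset ℕ, (∀ a ∈ A, 1 ≤ a) → domBelow A B → A ∈ E

/-- The vertex set `T` spans a clique in the `r`-graph `E`. -/
def hasCliqueOn (E : Finset (Finset ℕ)) (r : ℕ) (T : Finset ℕ) : Prop :=
  ∀ e ⊆ T, e.card = r → e ∈ E

/-- `x` is an optimal weighting for the `r`-graph `E` on `[n]`. -/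
def isOptimal (n : ℕ) (E : Finset (Finset ℕ)) (x : ℕ → ℝ) : Prop :=
  simplexOn n x ∧ lagF E x = lagr n E

/-- Number of nonzero weights. -/
noncomputable def suppCard (n : ℕ) (x : ℕ → ℝ) : ℕ := ((Finset.Icc 1 n).filter fun i => x i ≠ 0).card

/-- A minimal optimal weighting: optimal, and any weighting with fewer nonzero
weights has strictly smaller Lagrangian value. -/
def isMinOptimal (n : ℕ) (E : Finset (Finset ℕ)) (x : ℕ → ℝ) : Prop :=
  isOptimal n E x ∧
    ∀ y : ℕ → ℝ, simplexOn n y → suppCard n y < suppCard n x → lagF E y < lagr n E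

/-! Moving weight `t` from a vertex `j` to a vertex `i` changes `λ(E, x)` by
`t (λ(E_i, x) - λ(E_j, x)) - t² λ(E_{ij}, x)`. At an optimal weighting this cannot be positive for
small `t`, so all vertices of the support have the same link value, which Euler's identity
`∑ xᵢ λ(E_i, x) = r λ(E, x)` pins down as `r λ(G)`. If no edge contains both `i` and `j`, the quadratic
term vanishes, so moving all of `x j` onto `i` keeps the value optimal with one nonzero weight fewer. -/

def moveWeight (x : ℕ → ℝ) (i j : ℕ) (t : ℝ) : ℕ → ℝ := x + Pi.single i t - Pi.single j t

section moveWeight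

variable {x : ℕ → ℝ} {i j : ℕ} {t : ℝ}

lemma moveWeight_apply_left (hij : i ≠ j) : moveWeight x i j t i = x i + t := by
  simp [moveWeight, hij]

lemma moveWeight_apply_right (hij : i ≠ j) : moveWeight x i j t j = x j - t := by
  simp [moveWeight, hij.symm]

lemma moveWeight_apply_of_ne {m : ℕ} (hmi : m ≠ i) (hmj : m ≠ j) :
    moveWeight x i j t m = x m := by
  simp [moveWeight, hmi, hmj]

lemma simplexOn_moveWeight {n : ℕ} (hx : simplexOn n x) (hi : i ∈ Icc 1 n) (hj : j ∈ Icc 1 n)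
    (hij : i ≠ j) (ht : 0 ≤ t) (htj : t ≤ x j) : simplexOn n (moveWeight x i j t) := by
  obtain ⟨hx0, hx1, hxz⟩ := hx
  refine ⟨fun m => ?_, ?_, fun m hm => ?_⟩
  · rcases eq_or_ne m i with rfl | hmi
    · rw [moveWeight_apply_left hij]; linarith [hx0 m]
    rcases eq_or_ne m j with rfl | hmj
    · rw [moveWeight_apply_right hij]; linarith
    · rw [moveWeight_apply_of_ne hmi hmj]; exact hx0 m
  · simp only [moveWeight, Pi.sub_apply, Pi.add_apply, sum_sub_distrib, sum_add_distrib,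
      sum_pi_single', if_pos hi, if_pos hj, hx1]
    ring
  · rw [moveWeight_apply_of_ne (ne_of_mem_of_not_mem hi hm).symm
      (ne_of_mem_of_not_mem hj hm).symm, hxz m hm]

end moveWeight

lemma prod_eq_ite_mul_prod_erase (y : ℕ → ℝ) (e : Finset ℕ) (i : ℕ) :
    ∏ m ∈ e, y m = (if i ∈ e then y i else 1) * ∏ m ∈ e.erase i, y m := by
  split_ifs with hi
  · exact (mul_prod_erase e y hi).symm
  · rw [one_mul, erase_eq_of_notMem hi]

lemma prod_moveWeight (x : ℕ → ℝ) {i j : ℕ} (hij : i ≠ j) (t : ℝ) (e : Finset ℕ) :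
    ∏ m ∈ e, moveWeight x i j t m =
      ∏ m ∈ e, x m
      + t * (if i ∈ e then ∏ m ∈ e.erase i, x m else 0)
      - t * (if j ∈ e then ∏ m ∈ e.erase j, x m else 0)
      - t ^ 2 * (if i ∈ e ∧ j ∈ e then ∏ m ∈ (e.erase i).erase j, x m else 0) := by
  have hcore : ∏ m ∈ (e.erase i).erase j, moveWeight x i j t m = ∏ m ∈ (e.erase i).erase j, x m :=
    prod_congr rfl fun m hm => by
      obtain ⟨hmj, hm⟩ := mem_erase.mp hm
      exact moveWeight_apply_of_ne (mem_erase.mp hm).1 hmj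
  have hj : j ∈ e.erase i ↔ j ∈ e := by simp [hij.symm]
  have hi : i ∈ e.erase j ↔ i ∈ e := by simp [hij]
  rw [prod_eq_ite_mul_prod_erase _ e i, prod_eq_ite_mul_prod_erase _ (e.erase i) j, hcore,
    prod_eq_ite_mul_prod_erase x e i, prod_eq_ite_mul_prod_erase x (e.erase i) j,
    prod_eq_ite_mul_prod_erase x (e.erase j) i, erase_right_comm (s := e) (a := j),
    moveWeight_apply_left hij, moveWeight_apply_right hij]
  simp only [hi, hj, ite_and]
  split_ifs <;> ring

lemma lagF_link (E : Finset (Finset ℕ)) (i : ℕ) (x : ℕ → ℝ) :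
    lagF (link E i) x = ∑ e ∈ E with i ∈ e, ∏ m ∈ e.erase i, x m := by
  rw [lagF, link, sum_image]
  exact fun a ha b hb => erase_injOn' i (mem_filter.mp ha).2 (mem_filter.mp hb).2

lemma lagF_link2 (E : Finset (Finset ℕ)) {i j : ℕ} (hij : i ≠ j) (x : ℕ → ℝ) :
    lagF (link2 E i j) x = ∑ e ∈ E with i ∈ e ∧ j ∈ e, ∏ m ∈ (e.erase i).erase j, x m := by
  rw [lagF, link2, sum_image]
  intro a ha b hb h
  obtain ⟨hai, haj⟩ := (mem_filter.mp ha).2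
  obtain ⟨hbi, hbj⟩ := (mem_filter.mp hb).2
  exact erase_injOn' i hai hbi <|
    erase_injOn' j (mem_erase.mpr ⟨hij.symm, haj⟩) (mem_erase.mpr ⟨hij.symm, hbj⟩) h

lemma lagF_moveWeight (E : Finset (Finset ℕ)) (x : ℕ → ℝ) {i j : ℕ} (hij : i ≠ j) (t : ℝ) :
    lagF E (moveWeight x i j t) =
      lagF E x + t * (lagF (link E i) x - lagF (link E j) x) - t ^ 2 * lagF (link2 E i j) x := by
  rw [lagF, sum_congr rfl fun e _ => prod_moveWeight x hij t e, lagF_link, lagF_link,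
    lagF_link2 E hij, lagF, sum_filter, sum_filter, sum_filter, sum_sub_distrib, sum_sub_distrib,
    sum_add_distrib, ← mul_sum, ← mul_sum, ← mul_sum]
  ring

lemma lagF_nonneg (F : Finset (Finset ℕ)) {x : ℕ → ℝ} (hx : ∀ m, 0 ≤ x m) : 0 ≤ lagF F x :=
  sum_nonneg fun _ _ => prod_nonneg fun m _ => hx m

lemma lagF_le_lagr {n : ℕ} (E : Finset (Finset ℕ)) {y : ℕ → ℝ} (hy : simplexOn n y) :
    lagF E y ≤ lagr n E := by
  refine le_csSup ⟨E.card, ?_⟩ ⟨y, hy, rfl⟩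
  rintro v ⟨z, ⟨hz0, hz1, hzz⟩, rfl⟩
  have hz_le_one : ∀ m, z m ≤ 1 := fun m => by
    by_cases hm : m ∈ Icc 1 n
    · exact hz1 ▸ single_le_sum (fun i _ => hz0 i) hm
    · rw [hzz m hm]; exact zero_le_one
  calc lagF E z ≤ ∑ _e ∈ E, (1 : ℝ) :=
        sum_le_sum fun e _ => prod_le_one (fun m _ => hz0 m) fun m _ => hz_le_one m
    _ = E.card := by simp

lemma sum_mul_lagF_link {r n : ℕ} {E : Finset (Finset ℕ)} (hG : isRGraph r n E) (x : ℕ → ℝ) :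
    ∑ i ∈ Icc 1 n, x i * lagF (link E i) x = r * lagF E x := by
  have hterm : ∀ i, x i * lagF (link E i) x = ∑ e ∈ E, if i ∈ e then ∏ m ∈ e, x m else 0 := by
    intro i
    rw [lagF_link, mul_sum, sum_filter]
    refine sum_congr rfl fun e _ => ?_
    split_ifs with h
    · exact mul_prod_erase e x h
    · rfl
  simp_rw [hterm]
  rw [sum_comm, lagF, mul_sum]
  refine sum_congr rfl fun e he => ?_
  rw [sum_ite_mem, inter_eq_right.mpr (hG e he).2, sum_const, (hG e he).1, nsmul_eq_mul]

section optimal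

variable {n : ℕ} {E : Finset (Finset ℕ)} {x : ℕ → ℝ} {i j : ℕ}

lemma lagF_link_le_of_isOptimal (hx : isOptimal n E x) (hi : i ∈ Icc 1 n) (hj : j ∈ Icc 1 n)
    (hxj : 0 < x j) : lagF (link E i) x ≤ lagF (link E j) x := by
  rcases eq_or_ne i j with rfl | hij
  · rfl
  by_contra! hlt
  set d := lagF (link E i) x - lagF (link E j) x
  set c := lagF (link2 E i j) x
  have hd : 0 < d := sub_pos.mpr hlt
  have hc : 0 ≤ c := lagF_nonneg _ hx.1.1
  -- small enough that the linear gain `t * d` beats the quadratic loss `t ^ 2 * c`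
  set t := min (x j) (d / (c + 1))
  have ht : 0 < t := lt_min hxj (by positivity)
  have htc : t * c < d := by
    have : t * (c + 1) ≤ d := (le_div_iff₀ (by positivity)).mp (min_le_right _ _)
    nlinarith
  have hgain : lagr n E < lagF E (moveWeight x i j t) := by
    rw [lagF_moveWeight E x hij, hx.2]
    nlinarith [mul_pos ht (sub_pos.mpr htc)]
  exact hgain.not_ge <| lagF_le_lagr E <|
    simplexOn_moveWeight hx.1 hi hj hij ht.le (min_le_left _ _)

lemma lagF_link_eq_of_isOptimal (hx : isOptimal n E x) (hi : i ∈ Icc 1 n) (hj : j ∈ Icc 1 n)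
    (hxi : 0 < x i) (hxj : 0 < x j) : lagF (link E i) x = lagF (link E j) x :=
  le_antisymm (lagF_link_le_of_isOptimal hx hi hj hxj) (lagF_link_le_of_isOptimal hx hj hi hxi)

lemma lagF_link_eq_mul_lagr {r : ℕ} (hG : isRGraph r n E) (hx : isOptimal n E x)
    (hi : i ∈ Icc 1 n) (hxi : 0 < x i) : lagF (link E i) x = r * lagr n E := by
  have hterm : ∀ m ∈ Icc 1 n, x m * lagF (link E m) x = x m * lagF (link E i) x := by
    intro m hm
    rcases (hx.1.1 m).eq_or_lt with hxm | hxm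
    · rw [← hxm, zero_mul, zero_mul]
    · rw [lagF_link_eq_of_isOptimal hx hm hi hxm hxi]
  rw [← hx.2, ← sum_mul_lagF_link hG, sum_congr rfl hterm, ← sum_mul, hx.1.2.1, one_mul]

lemma suppCard_moveWeight_lt (hj : j ∈ Icc 1 n) (hij : i ≠ j)
    (hxi : x i ≠ 0) (hxj : x j ≠ 0) : suppCard n (moveWeight x i j (x j)) < suppCard n x := by
  have hsub : {m ∈ Icc 1 n | moveWeight x i j (x j) m ≠ 0} ⊆ {m ∈ Icc 1 n | x m ≠ 0}.erase j := by
    intro m hm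
    obtain ⟨hm, hym⟩ := mem_filter.mp hm
    have hmj : m ≠ j := by
      rintro rfl
      exact hym (by rw [moveWeight_apply_right hij, sub_self])
    refine mem_erase.mpr ⟨hmj, mem_filter.mpr ⟨hm, ?_⟩⟩
    rcases eq_or_ne m i with rfl | hmi
    · exact hxi
    · rwa [moveWeight_apply_of_ne hmi hmj] at hym
  exact (card_le_card hsub).trans_lt <| card_erase_lt_of_mem <| mem_filter.mpr ⟨hj, hxj⟩

lemma exists_mem_edge_of_isMinOptimal (hx : isMinOptimal n E x) (hi : i ∈ Icc 1 n)
    (hj : j ∈ Icc 1 n) (hij : i ≠ j) (hxi : 0 < x i) (hxj : 0 < x j) :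
    ∃ e ∈ E, i ∈ e ∧ j ∈ e := by
  by_contra! hno
  have hlink2 : lagF (link2 E i j) x = 0 := by
    rw [lagF_link2 E hij, filter_false_of_mem fun e he h => hno e he h.1 h.2, sum_empty]
  have hmove : lagF E (moveWeight x i j (x j)) = lagr n E := by
    rw [lagF_moveWeight E x hij, lagF_link_eq_of_isOptimal hx.1 hi hj hxi hxj, hlink2, hx.1.2]
    ring
  have hlt := hx.2 _ (simplexOn_moveWeight hx.1.1 hi hj hij (hx.1.1.1 j) le_rfl)
    (suppCard_moveWeight_lt hj hij hxi.ne' hxj.ne')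
  exact hlt.ne hmove

end optimal

theorem frankl_rodl (r n k : ℕ) (E : Finset (Finset ℕ)) (x : ℕ → ℝ)
    (hG : isRGraph r n E) (hk : k ≤ n)
    (hopt : isMinOptimal n E x)
    (hsupp : ∀ i ∈ Finset.Icc 1 n, (x i ≠ 0 ↔ i ∈ Finset.Icc 1 k)) :
    ∀ i ∈ Finset.Icc 1 k, ∀ j ∈ Finset.Icc 1 k, i ≠ j →
      (lagF (link E i) x = (r : ℝ) * lagr n E ∧
        lagF (link E j) x = (r : ℝ) * lagr n E ∧
        ∃ e ∈ E, i ∈ e ∧ j ∈ e) := by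
  intro i hi j hj hij
  have hsub : Icc 1 k ⊆ Icc 1 n := Icc_subset_Icc_right hk
  have hpos : ∀ m ∈ Icc 1 k, 0 < x m := fun m hm =>
    (hopt.1.1.1 m).lt_of_ne ((hsupp m (hsub hm)).mpr hm).symm
  exact ⟨lagF_link_eq_mul_lagr hG hopt.1 (hsub hi) (hpos i hi),
    lagF_link_eq_mul_lagr hG hopt.1 (hsub hj) (hpos j hj),
    exists_mem_edge_of_isMinOptimal hopt (hsub hi) (hsub hj) hij (hpos i hi) (hpos j hj)⟩
end

section
/- For positive integers $m$, $l$, $r$ satisfying $\binom{l-1}{r} \le m \le \binom{l-1}{r} + \binom{l-2}{r-1}$, the $r$-graph $C_{r,m}$ formed by the first $m$ elements of the colex ordering of $\mathbb{N}^{(r)}$ satisfies $\lambda(C_{r,m}) = \lambda([l-1]^{(r)})$. -/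
open Finset

/-!
Write `l = n + 2` and `r = k + 1`. Since `m ≥ C(n+1, k+1)`, the colex initial segment `E`
contains `K = [n+1]^(k+1)`. No edge of `E` contains both `n+1` and `n+2`: such an edge would be
preceded in colex by all of `K` and all sets `{n+2} ∪ A` with `A ∈ [n]^(k)`, which already exceed
the bound on `m`. So `E ⊆ K ∪ {{n+2} ∪ A : A ∈ [n]^(k)}`. By Pascal's rule
`K = [n]^(k+1) ∪ {{n+1} ∪ A : A ∈ [n]^(k)}`, hence the Lagrangian polynomial of this union at `x`
equals that of `K` at the weighting obtained by moving the weight of `n+2` onto `n+1`.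
Therefore `λ(E) ≤ λ(K)`, and `λ(K) ≤ λ(E)` because `K ⊆ E`.
-/

section Lagrangian

variable {n : ℕ} {E F : Finset (Finset ℕ)} {x y : ℕ → ℝ}

lemma simplexOn.le_one (hx : simplexOn n x) (i : ℕ) : x i ≤ 1 := by
  by_cases hi : i ∈ Icc 1 n
  · exact hx.2.1 ▸ single_le_sum (fun j _ => hx.1 j) hi
  · rw [hx.2.2 i hi]; exact zero_le_one

lemma simplexOn.mono {n' : ℕ} (hx : simplexOn n x) (hn : n ≤ n') : simplexOn n' x := by
  have hsub : Icc 1 n ⊆ Icc 1 n' := Icc_subset_Icc_right hn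
  refine ⟨hx.1, ?_, fun i hi => hx.2.2 i fun h => hi (hsub h)⟩
  rw [← sum_subset hsub fun i _ hi => hx.2.2 i hi, hx.2.1]

lemma simplexOn_single_one (hn : 1 ≤ n) : simplexOn n (Pi.single 1 1) := by
  refine ⟨fun i => ?_, ?_, fun i hi => ?_⟩
  · by_cases h : i = 1 <;> simp [h]
  · simp [sum_pi_single', hn]
  · have : i ≠ 1 := by rintro rfl; simp [hn] at hi
    simp [this]

lemma lagF_le_card (hx : simplexOn n x) : lagF E x ≤ E.card :=
  calc lagF E x ≤ ∑ _e ∈ E, (1 : ℝ) :=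
        sum_le_sum fun _ _ => prod_le_one (fun i _ => hx.1 i) fun i _ => hx.le_one i
    _ = E.card := by simp

lemma le_lagr (hx : simplexOn n x) : lagF E x ≤ lagr n E :=
  le_csSup ⟨E.card, by rintro v ⟨y, hy, rfl⟩; exact lagF_le_card hy⟩ ⟨x, hx, rfl⟩

lemma lagr_le {c : ℝ} (hn : 1 ≤ n) (h : ∀ x, simplexOn n x → lagF E x ≤ c) : lagr n E ≤ c :=
  csSup_le ⟨_, _, simplexOn_single_one hn, rfl⟩ (by rintro v ⟨x, hx, rfl⟩; exact h x hx)

lemma lagF_mono (hEF : E ⊆ F) (hx : ∀ i, 0 ≤ x i) : lagF E x ≤ lagF F x :=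
  sum_le_sum_of_subset_of_nonneg hEF fun _ _ _ => prod_nonneg fun i _ => hx i

lemma lagr_mono {n' : ℕ} (hn : 1 ≤ n) (hnn' : n ≤ n') (hEF : E ⊆ F) : lagr n E ≤ lagr n' F :=
  lagr_le hn fun _ hx => (lagF_mono hEF hx.1).trans (le_lagr (hx.mono hnn'))

lemma lagF_congr (h : ∀ e ∈ E, ∀ i ∈ e, x i = y i) : lagF E x = lagF E y :=
  sum_congr rfl fun e he => prod_congr rfl (h e he)

lemma lagF_union (h : Disjoint E F) : lagF (E ∪ F) x = lagF E x + lagF F x := sum_union h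

end Lagrangian

section InsertVertex

variable {a : ℕ} {E F : Finset (Finset ℕ)}

lemma injOn_insert_of_forall_notMem (ha : ∀ e ∈ F, a ∉ e) :
    Set.InjOn (insert a) (F : Set (Finset ℕ)) :=
  fun s hs t ht hst => by rw [← erase_insert (ha s hs), hst, erase_insert (ha t ht)]

lemma card_image_insert (ha : ∀ e ∈ F, a ∉ e) : (F.image (insert a)).card = F.card :=
  card_image_of_injOn (injOn_insert_of_forall_notMem ha)

lemma disjoint_image_insert (ha : ∀ e ∈ E, a ∉ e) : Disjoint E (F.image (insert a)) := by
  rw [disjoint_left]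
  rintro e he h
  obtain ⟨s, -, rfl⟩ := mem_image.mp h
  exact ha _ he (mem_insert_self a s)

lemma lagF_image_insert {x : ℕ → ℝ} (ha : ∀ e ∈ F, a ∉ e) :
    lagF (F.image (insert a)) x = x a * lagF F x := by
  rw [lagF, sum_image (injOn_insert_of_forall_notMem ha), lagF, mul_sum]
  exact sum_congr rfl fun e he => prod_insert (ha e he)

lemma lagF_powersetCard_succ_insert {x : ℕ → ℝ} {k : ℕ} {S : Finset ℕ} (ha : a ∉ S) :
    lagF (powersetCard (k + 1) (insert a S)) x =
      lagF (powersetCard (k + 1) S) x + x a * lagF (powersetCard k S) x := by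
  have hS : ∀ j, ∀ e ∈ powersetCard j S, a ∉ e := fun j e he h => ha ((mem_powersetCard.mp he).1 h)
  rw [powersetCard_succ_insert ha, lagF_union (disjoint_image_insert (hS _)),
    lagF_image_insert (hS k)]

end InsertVertex

-- Moves the weight of `b` onto `a`; meant for `a ≠ b`.
def mergeWeight (x : ℕ → ℝ) (a b : ℕ) : ℕ → ℝ :=
  Function.update (Function.update x b 0) a (x a + x b)

lemma lagF_union_image_insert_eq_mergeWeight {x : ℕ → ℝ} {a b k : ℕ} {S : Finset ℕ}
    (ha : a ∉ S) (hb : b ∉ S) (hab : a ≠ b) :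
    lagF (powersetCard (k + 1) (insert a S) ∪ (powersetCard k S).image (insert b)) x =
      lagF (powersetCard (k + 1) (insert a S)) (mergeWeight x a b) := by
  have hSx : ∀ j, ∀ e ∈ powersetCard j S, ∀ i ∈ e, mergeWeight x a b i = x i := by
    intro j e he i hi
    have hiS := (mem_powersetCard.mp he).1 hi
    simp [mergeWeight, ne_of_mem_of_not_mem hiS ha, ne_of_mem_of_not_mem hiS hb]
  have hbS : ∀ j, ∀ e ∈ powersetCard j (insert a S), b ∉ e := fun j e he h =>
    (mem_insert.mp ((mem_powersetCard.mp he).1 h)).elim (fun h => hab h.symm) hb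
  have hbS' : ∀ e ∈ powersetCard k S, b ∉ e := fun e he =>
    hbS k e (powersetCard_mono (subset_insert a S) he)
  rw [lagF_union (disjoint_image_insert (hbS _)), lagF_image_insert hbS',
    lagF_powersetCard_succ_insert ha, lagF_powersetCard_succ_insert ha,
    lagF_congr (hSx (k + 1)), lagF_congr (hSx k)]
  simp [mergeWeight]
  ring

lemma simplexOn_mergeWeight {n : ℕ} {x : ℕ → ℝ} (hx : simplexOn (n + 2) x) :
    simplexOn (n + 1) (mergeWeight x (n + 1) (n + 2)) := by
  have hlow : ∀ i ∈ Icc 1 n, mergeWeight x (n + 1) (n + 2) i = x i := fun i hi => by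
    have := (mem_Icc.mp hi).2
    simp [mergeWeight, show i ≠ n + 1 by omega, show i ≠ n + 2 by omega]
  refine ⟨fun i => ?_, ?_, fun i hi => ?_⟩
  · unfold mergeWeight
    simp only [Function.update_apply]
    split_ifs
    exacts [add_nonneg (hx.1 _) (hx.1 _), le_rfl, hx.1 i]
  · have hsum := hx.2.1
    rw [sum_Icc_succ_top (by omega), sum_Icc_succ_top (by omega)] at hsum
    rw [sum_Icc_succ_top (by omega), sum_congr rfl hlow]
    simp [mergeWeight]
    linarith
  · have := mt mem_Icc.mpr hi
    unfold mergeWeight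
    simp only [Function.update_apply]
    split_ifs with h1 h2
    · omega
    · rfl
    · exact hx.2.2 i (by rw [mem_Icc]; omega)

def IsColexInitialSeg (r : ℕ) (E : Finset (Finset ℕ)) : Prop :=
  ∀ A ∈ E, ∀ B : Finset ℕ, B.card = r → (∀ b ∈ B, 1 ≤ b) → toColex B < toColex A → B ∈ E

lemma card_completeR (r n : ℕ) : (completeR r n).card = n.choose r := by
  simp [completeR]

lemma notMem_of_mem_completeR {r n i : ℕ} {A : Finset ℕ} (hA : A ∈ completeR r n) (hi : n < i) :
    i ∉ A := fun h => by
  have := (mem_Icc.mp ((mem_powersetCard.mp hA).1 h)).2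
  omega

lemma toColex_insert_lt_toColex {A e : Finset ℕ} {a b : ℕ} (hA : ∀ i ∈ A, i < a) (hab : a < b)
    (ha : a ∈ e) (hb : b ∈ e) : toColex (insert b A) < toColex e := by
  refine Colex.toColex_lt_toColex_iff_exists_forall_lt.mpr
    ⟨a, ha, fun h => ?_, fun i hi hie => ?_⟩
  · rcases mem_insert.mp h with h | h
    · omega
    · exact (hA a h).false
  · rcases mem_insert.mp hi with rfl | hi
    · exact absurd hb hie
    · exact hA i hi

section ColexInitialSeg

variable {E : Finset (Finset ℕ)}

lemma IsColexInitialSeg.completeR_subset {r N n : ℕ} (hE : IsColexInitialSeg r E)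
    (hG : isRGraph r N E) (hcard : (completeR r n).card ≤ E.card) : completeR r n ⊆ E := by
  intro B hB
  by_contra hBE
  obtain ⟨hBsub, hBcard⟩ := mem_powersetCard.mp hB
  have hEK : E ⊆ (completeR r n).erase B := by
    intro A hA
    have hAB : toColex A ≤ toColex B := not_lt.mp fun h =>
      hBE (hE A hA B hBcard (fun b hb => (mem_Icc.mp (hBsub hb)).1) h)
    have hAn : ∀ a ∈ A, a ≤ n := Colex.forall_le_mono hAB fun b hb => (mem_Icc.mp (hBsub hb)).2
    refine mem_erase.mpr ⟨ne_of_mem_of_not_mem hA hBE,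
      mem_powersetCard.mpr ⟨fun a ha => ?_, (hG A hA).1⟩⟩
    exact mem_Icc.mpr ⟨(mem_Icc.mp ((hG A hA).2 ha)).1, hAn a ha⟩
  have := card_le_card hEK
  rw [card_erase_of_mem hB] at this
  have := card_pos.mpr ⟨B, hB⟩
  omega

variable {k n : ℕ}

lemma IsColexInitialSeg.card_lt_of_mem (hE : IsColexInitialSeg (k + 1) E)
    (hK : completeR (k + 1) (n + 1) ⊆ E) {e : Finset ℕ} (he : e ∈ E) (h1 : n + 1 ∈ e)
    (h2 : n + 2 ∈ e) : (n + 1).choose (k + 1) + n.choose k < E.card := by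
  set K := completeR (k + 1) (n + 1)
  set L := (completeR k n).image (insert (n + 2))
  have hL : ∀ A ∈ completeR k n, n + 2 ∉ A := fun A hA => notMem_of_mem_completeR hA (by omega)
  have hLE : L ⊆ E := by
    intro B hB
    obtain ⟨A, hA, rfl⟩ := mem_image.mp hB
    obtain ⟨hAsub, hAcard⟩ := mem_powersetCard.mp hA
    refine hE e he _ (by rw [card_insert_of_notMem (hL A hA), hAcard]) (fun b hb => ?_)
      (toColex_insert_lt_toColex (fun i hi => ?_) (by omega) h1 h2)
    · rcases mem_insert.mp hb with rfl | hb
      · omega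
      · exact (mem_Icc.mp (hAsub hb)).1
    · have := (mem_Icc.mp (hAsub hi)).2
      omega
  have heKL : e ∉ K ∪ L := by
    rw [mem_union, mem_image, not_or, not_exists]
    refine ⟨fun h => notMem_of_mem_completeR h (by omega) h2, fun A ⟨hA, hAe⟩ => ?_⟩
    rw [← hAe, mem_insert] at h1
    exact h1.elim (by omega) (notMem_of_mem_completeR hA (by omega))
  have hdisj : Disjoint K L :=
    disjoint_image_insert fun A hA => notMem_of_mem_completeR hA (by omega)
  have := card_le_card (insert_subset he (union_subset hK hLE))
  rwa [card_insert_of_notMem heKL, card_union_of_disjoint hdisj, card_image_insert hL,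
    card_completeR, card_completeR, Nat.succ_le_iff] at this

lemma IsColexInitialSeg.subset_union_image_insert (hE : IsColexInitialSeg (k + 1) E)
    (hG : isRGraph (k + 1) (n + 2) E) (hK : completeR (k + 1) (n + 1) ⊆ E)
    (hcard : E.card ≤ (n + 1).choose (k + 1) + n.choose k) :
    E ⊆ completeR (k + 1) (n + 1) ∪ (completeR k n).image (insert (n + 2)) := by
  intro e he
  obtain ⟨he_card, he_sub⟩ := hG e he
  have hle : ∀ i ∈ e, 1 ≤ i ∧ i ≤ n + 2 := fun i hi => mem_Icc.mp (he_sub hi)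
  by_cases h2 : n + 2 ∈ e
  · by_cases h1 : n + 1 ∈ e
    · exact absurd hcard (not_le.mpr (hE.card_lt_of_mem hK he h1 h2))
    refine mem_union_right _ (mem_image.mpr ⟨e.erase (n + 2), mem_powersetCard.mpr ⟨?_, ?_⟩,
      insert_erase h2⟩)
    · intro i hi
      have := hle i (mem_of_mem_erase hi)
      have : i ≠ n + 2 := ne_of_mem_erase hi
      have : i ≠ n + 1 := by rintro rfl; exact h1 (mem_of_mem_erase hi)
      exact mem_Icc.mpr (by omega)
    · rw [card_erase_of_mem h2, he_card, Nat.add_sub_cancel]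
  · refine mem_union_left _ (mem_powersetCard.mpr ⟨fun i hi => ?_, he_card⟩)
    have := hle i hi
    have : i ≠ n + 2 := by rintro rfl; exact h2 hi
    exact mem_Icc.mpr (by omega)

end ColexInitialSeg

theorem colex_initial_segment_lagrangian (r l m : ℕ) (E : Finset (Finset ℕ))
    (hr : 1 ≤ r) (hl : r + 1 ≤ l)
    (hm1 : (l - 1).choose r ≤ m) (hm2 : m ≤ (l - 1).choose r + (l - 2).choose (r - 1))
    (hG : isRGraph r l E) (hcard : E.card = m)
    (hinit : ∀ A ∈ E, ∀ B : Finset ℕ, B.card = r → (∀ b ∈ B, 1 ≤ b) →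
      toColex B < toColex A → B ∈ E) :
    lagr l E = lagr (l - 1) (completeR r (l - 1)) := by
  obtain ⟨k, rfl⟩ : ∃ k, r = k + 1 := ⟨r - 1, by omega⟩
  obtain ⟨n, rfl⟩ : ∃ n, l = n + 2 := ⟨l - 2, by omega⟩
  simp only [show n + 2 - 1 = n + 1 from rfl, show n + 2 - 2 = n from rfl,
    show k + 1 - 1 = k from rfl] at hm1 hm2 ⊢
  have hE : IsColexInitialSeg (k + 1) E := hinit
  have hK := hE.completeR_subset (n := n + 1) hG (by rw [card_completeR]; omega)
  have hEKL := hE.subset_union_image_insert hG hK (by omega)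
  have hS : completeR (k + 1) (n + 1) = powersetCard (k + 1) (insert (n + 1) (Icc 1 n)) := by
    rw [completeR, insert_Icc_right_eq_Icc_add_one (by omega)]
  refine le_antisymm (lagr_le (by omega) fun x hx => ?_) (lagr_mono (by omega) (by omega) hK)
  calc lagF E x
      ≤ lagF (completeR (k + 1) (n + 1) ∪ (completeR k n).image (insert (n + 2))) x :=
        lagF_mono hEKL hx.1
    _ = lagF (completeR (k + 1) (n + 1)) (mergeWeight x (n + 1) (n + 2)) := by
        rw [hS, completeR]
        exact lagF_union_image_insert_eq_mergeWeight (by simp) (by simp) (by omega)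
    _ ≤ lagr (n + 1) (completeR (k + 1) (n + 1)) := le_lagr (simplexOn_mergeWeight hx)
end
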